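/- With the notation below, for every integer a one has: U₂(a) = 4D²(−c)^a + ε̄·ε^{2a} + ε·ε̄^{2a} if n = 2, and U₂(a) = n²D²(−c)^a + (n(n−1)/2)·D²·(ε^{2a} + ε̄^{2a}) if n ≥ 3. -/

import Mathlib

open Polynomial IntermediateField

/-!
Since `ω` has degree `2n`, its minimal polynomial is `X^{2n} - ω^{2n} = (X^n - ω^n)(X^n + ω^n)`,
and the embeddings of `K` correspond to its roots. An embedding sending `ω` to a root `z` of the
first factor fixes `ε = D^n + z^n`; one sending `ω` to a root of the second factor maps `ε` to `ε̄`.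
Grouping the factors of `F_a(1, Y)` accordingly, each group is a homogenised `X^n - w`,
`∏_{z^n = w} (1 - D e Y - z e Y) = (1 - D e Y)^n - w (e Y)^n`,
with `w = ω^n, e = ε^a` for the first group and `w = -ω^n, e = ε̄^a` for the second.
`U₂(a)` is the coefficient of `Y²` in the product of the two groups; the `Y^n` terms contribute
only when `n = 2`, and the cross term is `n² D² (ε ε̄)^a = n² D² (-c)^a`.
-/

theorem coeff_sum_range_C_mul_X_pow {R : Type*} [Semiring R] {m k : ℕ} (hk : k < m)
    (f : ℕ → R) : (∑ h ∈ Finset.range m, C (f h) * X ^ h).coeff k = f k := by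
  simp [finsetSum_coeff, hk]

theorem one_sub_C_mul_X_pow_eq_sum {R : Type*} [CommRing R] (n : ℕ) (u : R) :
    (1 - C u * X) ^ n = ∑ m ∈ Finset.range (n + 1), C ((-u) ^ m * n.choose m) * X ^ m := by
  rw [sub_eq_add_neg, add_comm, add_pow]
  refine Finset.sum_congr rfl fun m _ => ?_
  simp only [C_mul, C_pow, C_neg, map_natCast, one_pow, mul_one]
  ring

theorem coeff_one_sub_C_mul_X_pow_sub_C_mul_X_pow {R : Type*} [CommRing R] {n k : ℕ}
    (hk : k ≤ n) (u s : R) :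
    ((1 - C u * X) ^ n - C s * X ^ n).coeff k =
      (-u) ^ k * n.choose k - if k = n then s else 0 := by
  rw [coeff_sub, coeff_C_mul_X_pow, one_sub_C_mul_X_pow_eq_sum,
    coeff_sum_range_C_mul_X_pow (Nat.lt_succ_of_le hk)]

theorem coeff_mul_two {R : Type*} [Semiring R] (p q : R[X]) :
    (p * q).coeff 2 = p.coeff 0 * q.coeff 2 + p.coeff 1 * q.coeff 1 + p.coeff 2 * q.coeff 0 := by
  rw [coeff_mul, Finset.Nat.sum_antidiagonal_eq_sum_range_succ_mk]
  simp [Finset.sum_range_succ, add_assoc]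

theorem coeff_two_mul_one_sub_C_mul_X_pow_sub_C_mul_X_pow {R : Type*} [CommRing R] {n : ℕ}
    (hn : 2 ≤ n) (u s v t : R) :
    (((1 - C u * X) ^ n - C s * X ^ n) * ((1 - C v * X) ^ n - C t * X ^ n)).coeff 2 =
      n.choose 2 * (u ^ 2 + v ^ 2) + n ^ 2 * (u * v) - if n = 2 then s + t else 0 := by
  simp only [coeff_mul_two, coeff_one_sub_C_mul_X_pow_sub_C_mul_X_pow (by omega : 0 ≤ n),
    coeff_one_sub_C_mul_X_pow_sub_C_mul_X_pow (by omega : 1 ≤ n),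
    coeff_one_sub_C_mul_X_pow_sub_C_mul_X_pow hn, Nat.choose_zero_right, Nat.choose_one_right,
    if_neg (by omega : 0 ≠ n), if_neg (by omega : 1 ≠ n)]
  rcases hn.eq_or_lt with rfl | hn
  · norm_num
    ring
  · simp only [if_neg hn.ne, if_neg hn.ne']
    ring

theorem coeff_prod_one_sub_C_mul_X {ι R : Type*} [Fintype ι] [CommRing R] [IsDomain R]
    [Infinite R] {m k : ℕ} (hk : k ≤ m) (b : ι → R) (u : ℕ → R)
    (hu : ∀ x y : R, ∏ i, (x - b i * y) =
      ∑ h ∈ Finset.range (m + 1), (-1) ^ h * u h * x ^ (m - h) * y ^ h) :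
    (∏ i, (1 - C (b i) * X)).coeff k = (-1) ^ k * u k := by
  have hpoly : ∏ i, (1 - C (b i) * X) =
      ∑ h ∈ Finset.range (m + 1), C ((-1) ^ h * u h) * X ^ h := by
    refine Polynomial.funext fun y => ?_
    simpa [eval_prod, eval_finsetSum] using hu 1 y
  rw [hpoly, coeff_sum_range_C_mul_X_pow (Nat.lt_succ_of_le hk)]

theorem prod_roots_X_pow_sub_C_map_sub_mul {K : Type*} [Field K] [IsAlgClosed K] {n : ℕ}
    (hn : n ≠ 0) (w y t : K) :
    ((X ^ n - C w).roots.map fun z => y - z * t).prod = y ^ n - w * t ^ n := by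
  have hcard : (X ^ n - C w).roots.card = n := by
    rw [IsAlgClosed.card_roots_eq_natDegree, natDegree_X_pow_sub_C]
  rcases eq_or_ne t 0 with rfl | ht
  · simp [hcard, hn]
  · have heval := (IsAlgClosed.splits (X ^ n - C w)).eval_eq_prod_roots_of_monic
      (monic_X_pow_sub_C w hn) (y / t)
    calc ((X ^ n - C w).roots.map fun z => y - z * t).prod
        = ((X ^ n - C w).roots.map fun z => t * (y / t - z)).prod := by
          congr 1
          exact Multiset.map_congr rfl fun z _ => by field_simp
      _ = t ^ n * (y ^ n / t ^ n - w) := by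
          rw [Multiset.prod_map_mul]
          simp [hcard, ← heval, div_pow]
      _ = y ^ n - w * t ^ n := by field_simp

theorem prod_roots_X_pow_sub_C_map_one_sub_mul {K : Type*} [Field K] [IsAlgClosed K] {n : ℕ}
    (hn : n ≠ 0) (w d y : K) (a : ℤ) :
    ((X ^ n - C w).roots.map fun z => 1 - (d + z) * (d ^ n + z ^ n) ^ a * y).prod =
      (1 - d * (d ^ n + w) ^ a * y) ^ n - w * ((d ^ n + w) ^ a * y) ^ n := by
  rw [← prod_roots_X_pow_sub_C_map_sub_mul hn]
  congr 1
  refine Multiset.map_congr rfl fun z hz => ?_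
  have hzw : z ^ n = w := by
    simpa [sub_eq_zero] using (mem_roots (monic_X_pow_sub_C w hn).ne_zero).1 hz
  rw [hzw]
  ring

theorem roots_X_pow_two_mul_sub_C_sq {K : Type*} [Field K] {n : ℕ} (hn : n ≠ 0) (w : K) :
    (X ^ (2 * n) - C (w ^ 2)).roots = (X ^ n - C w).roots + (X ^ n - C (-w)).roots := by
  have hfactor : (X ^ (2 * n) - C (w ^ 2) : K[X]) = (X ^ n - C w) * (X ^ n - C (-w)) := by
    rw [pow_mul', C_pow, map_neg]
    ring
  rw [hfactor, roots_mul (mul_ne_zero (monic_X_pow_sub_C w hn).ne_zero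
    (monic_X_pow_sub_C (-w) hn).ne_zero)]

theorem prod_algHom_adjoin_eq_prod_aroots {F K M : Type*} [Field F] [Field K] [Algebra F K]
    [CommMonoid M] {α : K} (hα : IsIntegral F α) (hsep : (minpoly F α).Separable)
    [Fintype (F⟮α⟯ →ₐ[F] K)] (f : K → M) :
    ∏ φ : F⟮α⟯ →ₐ[F] K, f (φ (AdjoinSimple.gen F α)) =
      (((minpoly F α).aroots K).map f).prod := by
  classical
  have hnodup : ((minpoly F α).aroots K).Nodup := nodup_roots hsep.map
  rw [← hnodup.dedup, ← Multiset.toFinset_val, ← Finset.prod_eq_multiset_prod,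
    Finset.prod_subtype _ (fun _ => Multiset.mem_toFinset) f]
  exact (Fintype.prod_equiv (algHomAdjoinIntegralEquiv F hα).symm _ _
    fun x => by rw [algHomAdjoinIntegralEquiv_symm_apply_gen]).symm

theorem minpoly_eq_X_pow_sub_C {F E : Type*} [Field F] [Field E] [Algebra F E] {α : E}
    {m : ℕ} (hm : m ≠ 0) {q : F} (hα : α ^ m = algebraMap F E q)
    (hdeg : (minpoly F α).natDegree = m) : minpoly F α = X ^ m - C q := by
  have hmon : (X ^ m - C q : F[X]).Monic := monic_X_pow_sub_C q hm
  have hroot : aeval α (X ^ m - C q : F[X]) = 0 := by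
    rw [map_sub, aeval_X_pow, aeval_C, hα, sub_self]
  exact (eq_of_monic_of_dvd_of_natDegree_le (minpoly.monic ⟨_, hmon, hroot⟩) hmon
    (minpoly.dvd F α hroot) (by rw [natDegree_X_pow_sub_C, hdeg])).symm

theorem prod_algHom_adjoin_eq_prod_roots_X_pow_sub_C {F K M : Type*} [Field F] [CharZero F]
    [Field K] [IsAlgClosed K] [Algebra F K] [CommMonoid M] {n : ℕ} (hn : n ≠ 0) {ω : K} {q : F}
    (hω : ω ^ (2 * n) = algebraMap F K q) (hdeg : (minpoly F ω).natDegree = 2 * n)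
    [Fintype (F⟮ω⟯ →ₐ[F] K)] (f : K → M) :
    ∏ φ : F⟮ω⟯ →ₐ[F] K, f (φ (AdjoinSimple.gen F ω)) =
      ((X ^ n - C (ω ^ n)).roots.map f).prod * ((X ^ n - C (-ω ^ n)).roots.map f).prod := by
  have hint : IsIntegral F ω := ⟨X ^ (2 * n) - C q, monic_X_pow_sub_C q (by omega), by
    rw [eval₂_sub, eval₂_X_pow, eval₂_C, hω, sub_self]⟩
  rw [prod_algHom_adjoin_eq_prod_aroots hint (minpoly.irreducible hint).separable,
    minpoly_eq_X_pow_sub_C (by omega) hω hdeg, aroots, Polynomial.map_sub, Polynomial.map_pow,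
    map_X, map_C, ← hω, pow_mul' ω 2 n, roots_X_pow_two_mul_sub_C_sq hn, Multiset.map_add,
    Multiset.prod_add]

theorem prod_algHom_adjoin_one_sub_C_mul_X {F K : Type*} [Field F] [CharZero F] [Field K]
    [IsAlgClosed K] [Algebra F K] {n : ℕ} (hn : n ≠ 0) {ω : K} {q : F}
    (hω : ω ^ (2 * n) = algebraMap F K q) (hdeg : (minpoly F ω).natDegree = 2 * n)
    [Fintype (F⟮ω⟯ →ₐ[F] K)] (d : K) (a : ℤ) :
    ∏ φ : F⟮ω⟯ →ₐ[F] K, (1 - C ((d + φ (AdjoinSimple.gen F ω)) *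
        (d ^ n + φ (AdjoinSimple.gen F ω) ^ n) ^ a) * X) =
      ((1 - C (d * (d ^ n + ω ^ n) ^ a) * X) ^ n
          - C (ω ^ n * ((d ^ n + ω ^ n) ^ a) ^ n) * X ^ n) *
        ((1 - C (d * (d ^ n - ω ^ n) ^ a) * X) ^ n
          - C (-ω ^ n * ((d ^ n - ω ^ n) ^ a) ^ n) * X ^ n) := by
  refine Polynomial.funext fun y => ?_
  simp only [eval_prod, eval_mul, eval_sub, eval_pow, eval_C, eval_X, eval_one]
  rw [prod_algHom_adjoin_eq_prod_roots_X_pow_sub_C hn hω hdeg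
      (fun z => 1 - (d + z) * (d ^ n + z ^ n) ^ a * y),
    prod_roots_X_pow_sub_C_map_one_sub_mul hn, prod_roots_X_pow_sub_C_map_one_sub_mul hn,
    ← sub_eq_add_neg]
  ring

theorem algHom_adjoin_simple_natCast_add_mul_zpow {F K : Type*} [Field F] [Field K]
    [Algebra F K] {ω : K} (d n : ℕ) (a : ℤ) (h : (d + ω) * (d ^ n + ω ^ n) ^ a ∈ F⟮ω⟯)
    (φ : F⟮ω⟯ →ₐ[F] K) :
    φ ⟨_, h⟩ = (d + φ (AdjoinSimple.gen F ω)) * (d ^ n + φ (AdjoinSimple.gen F ω) ^ n) ^ a :=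
  calc φ ⟨_, h⟩ = φ ((d + AdjoinSimple.gen F ω) * (d ^ n + AdjoinSimple.gen F ω ^ n) ^ a) := rfl
    _ = _ := by simp only [map_mul, map_zpow₀, map_add, map_pow, map_natCast]

theorem stmt_9_general
    (D n : ℕ) (hn : 2 ≤ n) (c : ℤ)
    (ω : ℝ) (hωpow : ω ^ (2 * n) = (D : ℝ) ^ (2 * n) + (c : ℝ))
    (hdeg : (minpoly ℚ ((ω : ℂ))).natDegree = 2 * n)
    (K : IntermediateField ℚ ℂ) (hK : K = IntermediateField.adjoin ℚ {(ω : ℂ)})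
    [FiniteDimensional ℚ K]
    (hmem : ∀ a : ℤ, ((D : ℂ) + (ω : ℂ)) * ((D : ℂ) ^ n + (ω : ℂ) ^ n) ^ a ∈ K)
    (U : ℕ → ℤ → ℂ)
    (hU : ∀ (a : ℤ) (X Y : ℂ),
      (∏ φ : K →ₐ[ℚ] ℂ,
          (X - φ ⟨((D : ℂ) + (ω : ℂ)) * ((D : ℂ) ^ n + (ω : ℂ) ^ n) ^ a, hmem a⟩ * Y))
        = ∑ h ∈ Finset.range (2 * n + 1), (-1) ^ h * U h a * X ^ (2 * n - h) * Y ^ h)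
    :
    (n = 2 → ∀ a : ℤ,
      U 2 a = 4 * (D : ℂ) ^ 2 * (-(c : ℂ)) ^ a
        + ((D : ℂ) ^ n - (ω : ℂ) ^ n) * ((D : ℂ) ^ n + (ω : ℂ) ^ n) ^ (2 * a)
        + ((D : ℂ) ^ n + (ω : ℂ) ^ n) * ((D : ℂ) ^ n - (ω : ℂ) ^ n) ^ (2 * a)) ∧
    (3 ≤ n → ∀ a : ℤ,
      U 2 a = (n : ℂ) ^ 2 * (D : ℂ) ^ 2 * (-(c : ℂ)) ^ a
        + ((n : ℂ) * ((n : ℂ) - 1) / 2) * (D : ℂ) ^ 2 *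
          (((D : ℂ) ^ n + (ω : ℂ) ^ n) ^ (2 * a)
            + ((D : ℂ) ^ n - (ω : ℂ) ^ n) ^ (2 * a))) := by
  subst hK
  have hωc : (ω : ℂ) ^ (2 * n) = (D : ℂ) ^ (2 * n) + c := by exact_mod_cast hωpow
  have hq : (ω : ℂ) ^ (2 * n) = algebraMap ℚ ℂ ((D : ℚ) ^ (2 * n) + c) := by simp [hωc]
  have hU2 (a : ℤ) :=
    (coeff_prod_one_sub_C_mul_X (by omega : 2 ≤ 2 * n) _ _ (hU a)).symm.trans <|
      congrArg (coeff · 2) <|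
        (Finset.prod_congr rfl fun φ _ => congrArg (fun b => 1 - C b * X)
          (algHom_adjoin_simple_natCast_add_mul_zpow D n a (hmem a) φ)).trans <|
        prod_algHom_adjoin_one_sub_C_mul_X (by omega) hq hdeg (D : ℂ) a
  simp only [neg_one_sq, one_mul] at hU2
  have hnorm (a : ℤ) :
      ((D : ℂ) ^ n + ω ^ n) ^ a * ((D : ℂ) ^ n - ω ^ n) ^ a = (-c) ^ a := by
    rw [← mul_zpow]
    congr 1
    linear_combination (pow_mul' (D : ℂ) 2 n).symm + pow_mul' (ω : ℂ) 2 n - hωc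
  have hsq (z : ℂ) (a : ℤ) : (z ^ a) ^ 2 = z ^ (2 * a) := by rw [zpow_mul', zpow_ofNat]
  refine ⟨fun h2 a => ?_, fun hn3 a => ?_⟩
  · subst h2
    rw [hU2, coeff_two_mul_one_sub_C_mul_X_pow_sub_C_mul_X_pow le_rfl, if_pos rfl,
      Nat.choose_self, Nat.cast_one]
    linear_combination 4 * (D : ℂ) ^ 2 * hnorm a
      + ((D : ℂ) ^ 2 - ω ^ 2) * hsq ((D : ℂ) ^ 2 + ω ^ 2) a
      + ((D : ℂ) ^ 2 + ω ^ 2) * hsq ((D : ℂ) ^ 2 - ω ^ 2) a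
  · rw [hU2, coeff_two_mul_one_sub_C_mul_X_pow_sub_C_mul_X_pow hn, if_neg (by omega),
      Nat.cast_choose_two]
    linear_combination (n : ℂ) ^ 2 * (D : ℂ) ^ 2 * hnorm a
      + ((n : ℂ) * ((n : ℂ) - 1) / 2) * (D : ℂ) ^ 2 *
        (hsq ((D : ℂ) ^ n + ω ^ n) a + hsq ((D : ℂ) ^ n - ω ^ n) a)

/-- With the Bernstein–Hasse notation, for every integer `a`:
`U₂(a) = 4D²(-c)^a + ε̄ ε^{2a} + ε ε̄^{2a}` if `n = 2`, and
`U₂(a) = n²D²(-c)^a + (n(n-1)/2) D² (ε^{2a} + ε̄^{2a})` if `n ≥ 3`. -/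
theorem stmt_9
    (D n : ℕ) (hD : 0 < D) (hn : 2 ≤ n) (c : ℤ) (hc : c = 1 ∨ c = -1)
    (hbig : 1 < (D : ℤ) ^ (2 * n) + c)
    (ω : ℝ) (hω : 1 < ω) (hωpow : ω ^ (2 * n) = (D : ℝ) ^ (2 * n) + (c : ℝ))
    (hdeg : (minpoly ℚ ((ω : ℂ))).natDegree = 2 * n)
    (K : IntermediateField ℚ ℂ) (hK : K = IntermediateField.adjoin ℚ {(ω : ℂ)})
    [FiniteDimensional ℚ K]
    (hmem : ∀ a : ℤ, ((D : ℂ) + (ω : ℂ)) * ((D : ℂ) ^ n + (ω : ℂ) ^ n) ^ a ∈ K)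
    (U : ℕ → ℤ → ℂ)
    (hU : ∀ (a : ℤ) (X Y : ℂ),
      (∏ φ : K →ₐ[ℚ] ℂ,
          (X - φ ⟨((D : ℂ) + (ω : ℂ)) * ((D : ℂ) ^ n + (ω : ℂ) ^ n) ^ a, hmem a⟩ * Y))
        = ∑ h ∈ Finset.range (2 * n + 1), (-1) ^ h * U h a * X ^ (2 * n - h) * Y ^ h)
    :
    (n = 2 → ∀ a : ℤ,
      U 2 a = 4 * (D : ℂ) ^ 2 * (-(c : ℂ)) ^ a
        + ((D : ℂ) ^ n - (ω : ℂ) ^ n) * ((D : ℂ) ^ n + (ω : ℂ) ^ n) ^ (2 * a)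
        + ((D : ℂ) ^ n + (ω : ℂ) ^ n) * ((D : ℂ) ^ n - (ω : ℂ) ^ n) ^ (2 * a)) ∧
    (3 ≤ n → ∀ a : ℤ,
      U 2 a = (n : ℂ) ^ 2 * (D : ℂ) ^ 2 * (-(c : ℂ)) ^ a
        + ((n : ℂ) * ((n : ℂ) - 1) / 2) * (D : ℂ) ^ 2 *
          (((D : ℂ) ^ n + (ω : ℂ) ^ n) ^ (2 * a)
            + ((D : ℂ) ^ n - (ω : ℂ) ^ n) ^ (2 * a))) :=
  stmt_9_general D n hn c ω hωpow hdeg K hK hmem U hU
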